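/- Let X be a Valdivia compact space of infinite weight κ. Then there exists a continuous inverse sequence (X_α, r^β_α, κ) indexed by the ordinals α < κ such that X is homeomorphic to its limit, each X_α is Valdivia compact of weight at most |α| + ℵ₀, and each bonding map r^β_α is a retraction. -/

import Mathlib

open Set Filter Topology

universe u v

/-- A `ι`-indexed family of topological spaces with bonding maps (the data of an
inverse sequence). -/
structure Tower (ι : Type v) [LinearOrder ι] where
  S : ι → Type u
  topo : ∀ α, TopologicalSpace (S α)
  r : ∀ ⦃α β : ι⦄, α ≤ β → S β → S α

attribute [instance] Tower.topo

namespace Tower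

variable {ι : Type v} [LinearOrder ι]

/-- The limit of the tower: its space of threads. -/
abbrev Lim (T : Tower.{u, v} ι) : Type (max u v) :=
  {x : ∀ α, T.S α // ∀ ⦃α β : ι⦄ (h : α ≤ β), T.r h (x β) = x α}

/-- The tower is a continuous inverse sequence of compact Hausdorff spaces:
all spaces are compact Hausdorff, the bonding maps are continuous surjections
satisfying the identity and composition laws, and at every limit point `δ` of the
index set the map `S δ → Π_{α<δ} S α` is injective. -/
structure IsContInvSeq (T : Tower.{u, v} ι) : Prop where
  compact : ∀ α, CompactSpace (T.S α)
  t2 : ∀ α, T2Space (T.S α)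
  continuous : ∀ ⦃α β : ι⦄ (h : α ≤ β), Continuous (T.r h)
  surjective : ∀ ⦃α β : ι⦄ (h : α ≤ β), Function.Surjective (T.r h)
  map_id : ∀ (α : ι) (x : T.S α), T.r (le_refl α) x = x
  map_comp : ∀ ⦃α β γ : ι⦄ (h₁ : α ≤ β) (h₂ : β ≤ γ) (x : T.S γ),
    T.r h₁ (T.r h₂ x) = T.r (h₁.trans h₂) x
  limit_inj : ∀ δ : ι, (∃ α, α < δ) → (∀ α, α < δ → ∃ β, α < β ∧ β < δ) →
    ∀ x y : T.S δ, (∀ (α : ι) (h : α < δ), T.r h.le x = T.r h.le y) → x = y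

end Tower

/-- A continuous surjection which admits a continuous right inverse. -/
def IsRetraction {X Y : Type*} [TopologicalSpace X] [TopologicalSpace Y]
    (f : X → Y) : Prop :=
  Continuous f ∧ Function.Surjective f ∧ ∃ g : Y → X, Continuous g ∧ f ∘ g = id

/-- `Σ(T)`: the points of the Tikhonov cube `[0,1]^T` with countable support. -/
def SigmaProd (T : Type*) : Set (T → unitInterval) :=
  {x | {t | x t ≠ 0}.Countable}

/-- A Valdivia embedding into the cube `[0,1]^T`. -/
def IsValdiviaEmbedding {X : Type*} [TopologicalSpace X] {T : Type*}
    (h : X → T → unitInterval) : Prop :=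
  Topology.IsEmbedding h ∧ Set.range h = closure (Set.range h ∩ SigmaProd T)

/-- A space is Valdivia compact if it admits a Valdivia embedding into some cube. -/
def IsValdivia (X : Type u) [TopologicalSpace X] : Prop :=
  ∃ (T : Type u) (h : X → T → unitInterval), IsValdiviaEmbedding h

/-- The weight of a topological space: the least cardinality of a base. -/
noncomputable def tweight (X : Type u) [TopologicalSpace X] : Cardinal.{u} :=
  sInf {c | ∃ B : Set (Set X), TopologicalSpace.IsTopologicalBasis B ∧ Cardinal.mk ↥B = c}

/-!
Embed `X` as a compact set `K ⊆ [0,1]^T` in which `D = K ∩ Σ(T)` is dense. For a set `S` of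
coordinates, the projection `x ↦ 1_S · x` maps `K` into itself as soon as it maps `D` into
`closure D`; its image is then a retract of `K`, is again Valdivia (the projection preserves
`Σ(T)`) and has weight at most `|S| + ℵ₀`. Such sets `S` are closed under directed unions, and
every `A ⊆ T` lies in one of size `|A| + ℵ₀`: close `A` off countably often under adding the
supports of countably many points of `D` whose restrictions to each finite `G ⊆ A` are dense.
A continuous increasing chain `(S_α)_{α<κ}` of such sets with `|S_α| ≤ |α| + ℵ₀`, exhausting a
separating set of `κ` coordinates, yields the inverse sequence of images, whose limit is `K`.
-/

open TopologicalSpace Cardinal Function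

theorem Cardinal.mk_finset_le_add_aleph0 (α : Type u) : #(Finset α) ≤ #α + ℵ₀ := by
  rcases finite_or_infinite α with hα | hα
  · exact mk_le_aleph0.trans le_add_self
  · exact (mk_finset_of_infinite α).le.trans le_self_add

theorem exists_isTopologicalBasis_mk_eq_tweight (X : Type u) [TopologicalSpace X] :
    ∃ B : Set (Set X), IsTopologicalBasis B ∧ #B = tweight X :=
  csInf_mem (s := {c | ∃ B : Set (Set X), IsTopologicalBasis B ∧ #B = c})
    ⟨_, _, isTopologicalBasis_opens, rfl⟩

section Weight

variable {X : Type u} [TopologicalSpace X]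

theorem tweight_le_mk {B : Set (Set X)} (hB : IsTopologicalBasis B) : tweight X ≤ #B :=
  csInf_le (OrderBot.bddBelow _) ⟨B, hB, rfl⟩

theorem tweight_le_of_isInducing {Y : Type u} [TopologicalSpace Y] {f : X → Y}
    (hf : IsInducing f) : tweight X ≤ tweight Y := by
  obtain ⟨B, hB, hBw⟩ := exists_isTopologicalBasis_mk_eq_tweight Y
  calc tweight X ≤ #(preimage f '' B) := tweight_le_mk (hB.isInducing hf)
    _ ≤ #B := mk_image_le
    _ = tweight Y := hBw

theorem tweight_pi_le (ι : Type u) (Y : Type) [TopologicalSpace Y] [SecondCountableTopology Y] :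
    tweight (ι → Y) ≤ #ι + ℵ₀ := by
  classical
  obtain ⟨C, hCc, -, hC⟩ := exists_countable_basis Y
  have := hCc.to_subtype
  let box : (Σ F : Finset ι, F → C) → Set (ι → Y) := fun p =>
    (p.1 : Set ι).pi fun i => if h : i ∈ p.1 then p.2 ⟨i, h⟩ else univ
  have hbox : {S | ∃ (U : ι → Set Y) (F : Finset ι), (∀ i ∈ F, U i ∈ C) ∧ S = (F : Set ι).pi U}
      ⊆ range box := by
    rintro S ⟨U, F, hU, rfl⟩
    exact ⟨⟨F, fun i => ⟨U i, hU i i.2⟩⟩, pi_congr rfl fun i hi => by simp [Finset.mem_coe.1 hi]⟩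
  calc tweight (ι → Y) ≤ #(range box) :=
        (tweight_le_mk (isTopologicalBasis_pi fun _ => hC)).trans (mk_le_mk_of_subset hbox)
    _ ≤ #(Σ F : Finset ι, F → C) := mk_range_le
    _ ≤ #(Finset ι) * ℵ₀ := by
        rw [mk_sigma]
        exact (sum_le_sum _ _ fun _ => mk_le_aleph0).trans (sum_const' _ _).le
    _ ≤ (#ι + ℵ₀) * ℵ₀ := by gcongr; exact mk_finset_le_add_aleph0 ι
    _ = #ι + ℵ₀ := mul_eq_left le_add_self le_add_self aleph0_ne_zero

end Weight

theorem exists_separating_coords {X T : Type u} {Y : Type*} [TopologicalSpace X]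
    [TopologicalSpace Y] [T2Space Y] {B : Set (Set X)} (hB : IsTopologicalBasis B)
    {h : X → T → Y} (hc : Continuous h) (hi : Injective h) :
    ∃ S₀ : Set T, #S₀ ≤ #B * #B ∧ ∀ x y, (∀ t ∈ S₀, h x t = h y t) → x = y := by
  let P : Set (B × B) := {p | ∃ t, ∀ a ∈ p.1.1, ∀ b ∈ p.2.1, h a t ≠ h b t}
  choose g hg using fun p : P => p.2
  refine ⟨range g, ?_, fun x y hxy => ?_⟩
  · calc #(range g) ≤ #P := mk_range_le
      _ ≤ #(B × B) := mk_subtype_le _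
      _ = #B * #B := by rw [mk_prod, lift_id]
  · by_contra hne
    obtain ⟨t, ht⟩ := Function.ne_iff.1 (hi.ne hne)
    have hW : IsOpen {p : X × X | h p.1 t ≠ h p.2 t} :=
      isOpen_ne_fun ((continuous_apply t).comp (hc.comp continuous_fst))
        ((continuous_apply t).comp (hc.comp continuous_snd))
    obtain ⟨_, ⟨U, hU, V, hV, rfl⟩, ⟨hxU, hyV⟩, hUV⟩ :=
      (hB.prod hB).exists_subset_of_mem_open (show (x, y) ∈ _ from ht) hW
    let p : P := ⟨(⟨U, hU⟩, ⟨V, hV⟩), t, fun a ha b hb => hUV (mk_mem_prod ha hb)⟩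
    exact hg p x hxU y hyV (hxy _ (mem_range_self p))

section Cube

variable {T Y : Type*}

theorem mem_closure_pi_of_forall_finite [TopologicalSpace Y] {x : T → Y} {D : Set (T → Y)}
    (h : ∀ F : Set T, F.Finite → ∀ V : T → Set Y, (∀ t, V t ∈ 𝓝 (x t)) →
      ∃ y ∈ D, ∀ t ∈ F, y t ∈ V t) : x ∈ closure D := by
  rw [mem_closure_iff_nhds]
  intro U hU
  rw [nhds_pi, Filter.mem_pi] at hU
  obtain ⟨F, hF, V, hV, hFV⟩ := hU
  obtain ⟨y, hyD, hyV⟩ := h F hF V hV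
  exact ⟨y, hFV hyV, hyD⟩

variable [Zero Y]

theorem indicator_indicator_of_subset {S S' : Set T} (h : S ⊆ S') (x : T → Y) :
    S.indicator (S'.indicator x) = S.indicator x := by
  rw [indicator_indicator, inter_eq_left.2 h]

theorem indicator_indicator_of_superset {S S' : Set T} (h : S ⊆ S') (x : T → Y) :
    S'.indicator (S.indicator x) = S.indicator x := by
  rw [indicator_indicator, inter_eq_right.2 h]

theorem indicator_eq_self_of_mem_image {K : Set (T → Y)} {S : Set T} {y : T → Y}
    (hy : y ∈ S.indicator '' K) : S.indicator y = y := by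
  obtain ⟨k, -, rfl⟩ := hy
  exact indicator_indicator_of_subset subset_rfl k

theorem mapsTo_indicator_image_indicator {K : Set (T → Y)} {S S' : Set T} (h : S ⊆ S') :
    MapsTo S.indicator (S'.indicator '' K) (S.indicator '' K) := by
  rintro _ ⟨k, hk, rfl⟩
  exact ⟨k, hk, (indicator_indicator_of_subset h k).symm⟩

variable [TopologicalSpace Y]

theorem continuous_indicator_pi (S : Set T) : Continuous fun x : T → Y => S.indicator x := by
  refine continuous_pi fun t => ?_
  by_cases ht : t ∈ S
  · simpa [indicator_of_mem ht] using continuous_apply t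
  · simpa [indicator_of_notMem ht] using continuous_const

theorem indicator_sUnion_mem_closure {𝒞 : Set (Set T)} (hne : 𝒞.Nonempty)
    (hdir : DirectedOn (· ⊆ ·) 𝒞) (x : T → Y) :
    (⋃₀ 𝒞).indicator x ∈ closure ((fun S => S.indicator x) '' 𝒞) := by
  refine mem_closure_pi_of_forall_finite fun F hF V hV => ?_
  obtain ⟨S, hS𝒞, hFS⟩ := hdir.exists_mem_subset_of_finite_of_subset_sUnion hne
    (hF.inter_of_left (⋃₀ 𝒞)) inter_subset_right
  refine ⟨S.indicator x, mem_image_of_mem _ hS𝒞, fun t ht => ?_⟩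
  have hSt : S.indicator x t = (⋃₀ 𝒞).indicator x t := by
    by_cases htU : t ∈ ⋃₀ 𝒞
    · rw [indicator_of_mem (hFS ⟨ht, htU⟩), indicator_of_mem htU]
    · rw [indicator_of_notMem htU, indicator_of_notMem fun htS => htU ⟨S, hS𝒞, htS⟩]
  exact hSt ▸ mem_of_mem_nhds (hV t)

theorem mapsTo_indicator_sUnion {D : Set (T → Y)} {𝒞 : Set (Set T)} (hne : 𝒞.Nonempty)
    (hdir : DirectedOn (· ⊆ ·) 𝒞) (h𝒞 : ∀ S ∈ 𝒞, MapsTo S.indicator D (closure D)) :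
    MapsTo (⋃₀ 𝒞).indicator D (closure D) := fun x hx =>
  closure_minimal (by rintro _ ⟨S, hS, rfl⟩; exact h𝒞 S hS hx) isClosed_closure
    (indicator_sUnion_mem_closure hne hdir x)

end Cube

theorem exists_countable_subset_image_subset_closure {α β : Type*} [TopologicalSpace β]
    [SecondCountableTopology β] (f : α → β) (s : Set α) :
    ∃ t ⊆ s, t.Countable ∧ f '' s ⊆ closure (f '' t) := by
  obtain ⟨u, huc, hud⟩ := exists_countable_dense (f '' s)
  obtain ⟨t, hts, hbij⟩ := ((surjOn_image f s).mono subset_rfl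
    (Subtype.coe_image_subset _ u)).exists_bijOn_subset
  refine ⟨t, hts, hbij.mapsTo.countable_of_injOn hbij.injOn (huc.image _), ?_⟩
  rw [hbij.image_eq]
  exact Subtype.dense_iff.1 hud

section ClosingOff

variable {T : Type u} {Y : Type*} [Zero Y]

def closingOffStep (E : Finset T → Set (T → Y)) (A : Set T) : Set T :=
  A ∪ ⋃ G ∈ {G : Finset T | ↑G ⊆ A}, ⋃ e ∈ E G, support e

theorem mk_closingOffStep_le {E : Finset T → Set (T → Y)} (hEc : ∀ G, (E G).Countable)
    (hE : ∀ G, ∀ e ∈ E G, (support e).Countable) (A : Set T) :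
    #(closingOffStep E A) ≤ #A + ℵ₀ := by
  classical
  have hfin : #{G : Finset T | ↑G ⊆ A} ≤ #A + ℵ₀ := by
    have hsub : {G : Finset T | ↑G ⊆ A} ⊆ range (Finset.map (Embedding.subtype (· ∈ A))) :=
      fun G hG => ⟨G.subtype (· ∈ A), Finset.subtype_map_of_mem fun t ht => hG ht⟩
    exact (mk_le_mk_of_subset hsub).trans (mk_range_le.trans (mk_finset_le_add_aleph0 A))
  have hsupp : ∀ G, #(⋃ e ∈ E G, support e) ≤ ℵ₀ := fun G =>
    ((hEc G).biUnion (hE G)).le_aleph0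
  have hinf : ℵ₀ ≤ #A + ℵ₀ := le_add_self
  refine (mk_union_le _ _).trans (add_le_of_le hinf le_self_add ?_)
  calc #(⋃ G ∈ {G : Finset T | ↑G ⊆ A}, ⋃ e ∈ E G, support e)
      ≤ #{G : Finset T | ↑G ⊆ A} * ⨆ G : {G : Finset T | ↑G ⊆ A}, #(⋃ e ∈ E G, support e) :=
        mk_biUnion_le _ _
    _ ≤ #A + ℵ₀ := mul_le_of_le hinf hfin
        ((ciSup_le' fun G : {G : Finset T | ↑G ⊆ A} => hsupp G).trans hinf)

theorem mk_iUnion_iterate_closingOffStep_le {E : Finset T → Set (T → Y)}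
    (hEc : ∀ G, (E G).Countable) (hE : ∀ G, ∀ e ∈ E G, (support e).Countable) (A : Set T) :
    #(⋃ n, (closingOffStep E)^[n] A) ≤ #A + ℵ₀ := by
  have hinf : ℵ₀ ≤ #A + ℵ₀ := le_add_self
  have hiter : ∀ n, #((closingOffStep E)^[n] A) ≤ #A + ℵ₀ := by
    intro n
    induction n with
    | zero => exact le_self_add
    | succ n ih =>
      rw [iterate_succ_apply']
      exact (mk_closingOffStep_le hEc hE _).trans (add_le_of_le hinf ih hinf)
  have := mk_iUnion_le_lift fun n => (closingOffStep E)^[n] A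
  rw [lift_uzero, mk_nat, lift_aleph0] at this
  exact this.trans (mul_le_of_le hinf hinf (ciSup_le' fun n => by simpa using hiter n))

variable [TopologicalSpace Y]

theorem mapsTo_indicator_iUnion_iterate_closingOffStep {D : Set (T → Y)}
    {E : Finset T → Set (T → Y)} (hED : ∀ G, E G ⊆ D)
    (hdense : ∀ G, G.restrict '' D ⊆ closure (G.restrict '' E G))
    (A : Set T) : MapsTo (⋃ n, (closingOffStep E)^[n] A).indicator D (closure D) := by
  intro d hd
  set S := ⋃ n, (closingOffStep E)^[n] A
  have hmono : Monotone fun n => (closingOffStep E)^[n] A := monotone_nat_of_le_succ fun n => by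
    rw [iterate_succ_apply']
    exact subset_union_left
  refine mem_closure_pi_of_forall_finite fun F hF V hV => ?_
  let G := (hF.inter_of_left S).toFinset
  obtain ⟨n, hn⟩ := hmono.directed_le.exists_mem_subset_of_finset_subset_biUnion (s := G)
    (by simp [G, S])
  have hVd : ∀ t : G, V t ∈ 𝓝 (G.restrict d t) := fun t => by
    have htS : (t : T) ∈ S := ((Set.Finite.mem_toFinset _).1 t.2).2
    simpa [indicator_of_mem htS] using hV t
  obtain ⟨_, hz, e, he, rfl⟩ := mem_closure_iff_nhds.1 (hdense G ⟨d, hd, rfl⟩)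
    (univ.pi fun t : G => V t) (set_pi_mem_nhds finite_univ fun t _ => hVd t)
  refine ⟨e, hED G he, fun t ht => ?_⟩
  by_cases htS : t ∈ S
  · exact hz ⟨t, (Set.Finite.mem_toFinset _).2 ⟨ht, htS⟩⟩ (mem_univ _)
  · -- `e` was chosen for the finite set `G ⊆ S`, so its support enters `S` one step later.
    have he0 : e t = 0 := by
      by_contra het
      refine htS (mem_iUnion.2 ⟨n + 1, ?_⟩)
      rw [iterate_succ_apply']
      exact Or.inr (mem_biUnion (x := G) hn (mem_biUnion he het))
    simpa [he0, indicator_of_notMem htS] using mem_of_mem_nhds (hV t)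

variable [SecondCountableTopology Y]

theorem exists_superset_mapsTo_indicator_closure {D : Set (T → Y)}
    (hD : ∀ d ∈ D, (support d).Countable) (A : Set T) :
    ∃ B, A ⊆ B ∧ MapsTo B.indicator D (closure D) ∧ #B ≤ #A + ℵ₀ := by
  choose E hED hEc hdense using fun G : Finset T =>
    exists_countable_subset_image_subset_closure G.restrict D
  exact ⟨⋃ n, (closingOffStep E)^[n] A, subset_iUnion (fun n => (closingOffStep E)^[n] A) 0,
    mapsTo_indicator_iUnion_iterate_closingOffStep hED hdense A,
    mk_iUnion_iterate_closingOffStep_le hEc (fun G e he => hD e (hED G he)) A⟩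

end ClosingOff

section ClosedChain

variable {T ι : Type u} [LinearOrder ι] [WellFoundedLT ι] (clo : Set T → Set T) (e : ι → Set T)

noncomputable def closedChainSucc : ι → Set T :=
  WellFoundedLT.fix fun α F => clo (e α ∪ (clo ∅ ∪ ⋃ β : Iio α, F β β.2))

-- `clo ∅` is included so that the chain starts with a `clo`-closed set at the least index.
def closedChain (α : ι) : Set T :=
  clo ∅ ∪ ⋃ β : Iio α, closedChainSucc clo e β

variable {clo e}

theorem closedChainSucc_eq (α : ι) :
    closedChainSucc clo e α = clo (e α ∪ closedChain clo e α) :=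
  WellFoundedLT.fix_eq _ α

theorem closedChainSucc_subset_closedChain {α β : ι} (h : α < β) :
    closedChainSucc clo e α ⊆ closedChain clo e β :=
  (subset_iUnion (fun γ : Iio β => closedChainSucc clo e γ) ⟨α, h⟩).trans subset_union_right

theorem closedChain_subset_iUnion {δ : ι} (hex : ∃ α, α < δ)
    (hlim : ∀ α < δ, ∃ β, α < β ∧ β < δ) :
    closedChain clo e δ ⊆ ⋃ α < δ, closedChain clo e α := by
  obtain ⟨α₀, hα₀⟩ := hex
  rintro t (ht | ht)
  · exact mem_biUnion hα₀ (subset_union_left ht)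
  · obtain ⟨⟨β, hβ⟩, htβ⟩ := mem_iUnion.1 ht
    obtain ⟨γ, hβγ, hγδ⟩ := hlim β hβ
    exact mem_biUnion hγδ (closedChainSucc_subset_closedChain hβγ htβ)

theorem closedChain_subset_closedChainSucc (hsub : ∀ A, A ⊆ clo A) (α : ι) :
    closedChain clo e α ⊆ closedChainSucc clo e α :=
  (closedChainSucc_eq α).symm ▸ subset_union_right.trans (hsub _)

theorem subset_closedChain (hsub : ∀ A, A ⊆ clo A) {α β : ι} (h : α < β) :
    e α ⊆ closedChain clo e β := by
  refine subset_trans ?_ (closedChainSucc_subset_closedChain h)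
  rw [closedChainSucc_eq]
  exact subset_union_left.trans (hsub _)

theorem monotone_closedChainSucc (hsub : ∀ A, A ⊆ clo A) :
    Monotone (closedChainSucc clo e) := fun _ β h => h.lt_or_eq.elim
  (fun h => (closedChainSucc_subset_closedChain h).trans
    (closedChain_subset_closedChainSucc hsub β))
  (fun h => h ▸ subset_rfl)

theorem monotone_closedChain : Monotone (closedChain clo e) := fun _ _ h =>
  union_subset subset_union_left
    (iUnion_subset fun γ => closedChainSucc_subset_closedChain (γ.2.trans_le h))

theorem closedChain_mem {P : Set T → Prop} (hsub : ∀ A, A ⊆ clo A) (hP : ∀ A, P (clo A))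
    (hchain : ∀ 𝒞 : Set (Set T), 𝒞.Nonempty → IsChain (· ⊆ ·) 𝒞 → (∀ S ∈ 𝒞, P S) → P (⋃₀ 𝒞))
    (α : ι) : P (closedChain clo e α) := by
  have hA : closedChain clo e α =
      ⋃₀ insert (clo ∅) (range fun β : Iio α => closedChainSucc clo e β) := by
    rw [sUnion_insert, sUnion_range, closedChain]
  rw [hA]
  refine hchain _ (insert_nonempty _ _) ?_ ?_
  · refine ((monotone_closedChainSucc hsub).comp (Subtype.mono_coe _)).isChain_range.insert ?_
    rintro _ ⟨β, rfl⟩ -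
    exact Or.inl ((show clo ∅ ⊆ closedChain clo e β from subset_union_left).trans
      (closedChain_subset_closedChainSucc (e := e) hsub β))
  · rintro S (rfl | ⟨β, rfl⟩)
    · exact hP ∅
    · simp only [closedChainSucc_eq, hP]

theorem mk_closedChain_le (hcard : ∀ A, #(clo A) ≤ #A + ℵ₀) (he : ∀ α, (e α).Countable)
    (α : ι) : #(closedChain clo e α) ≤ #(Iio α) + ℵ₀ := by
  induction α using WellFoundedLT.induction with
  | ind α ih =>
    have hinf : ℵ₀ ≤ #(Iio α) + ℵ₀ := le_add_self
    have hsucc : ∀ β : Iio α, #(closedChainSucc clo e β) ≤ #(Iio α) + ℵ₀ := fun β => by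
      have hIio : #(Iio β.1) ≤ #(Iio α) := mk_le_mk_of_subset (Iio_subset_Iio β.2.le)
      rw [closedChainSucc_eq]
      refine (hcard _).trans (add_le_of_le hinf ((mk_union_le _ _).trans ?_) hinf)
      exact add_le_of_le hinf ((he β).le_aleph0.trans hinf)
        ((ih β β.2).trans (add_le_add_left hIio _))
    refine (mk_union_le _ _).trans (add_le_of_le hinf ((hcard ∅).trans (by simp)) ?_)
    exact (mk_iUnion_le _).trans (mul_le_of_le hinf le_self_add (ciSup_le' hsucc))

end ClosedChain

theorem exists_continuous_chain {T ι : Type u} [LinearOrder ι] [WellFoundedLT ι]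
    (P : Set T → Prop) (hclo : ∀ A : Set T, ∃ B : Set T, A ⊆ B ∧ P B ∧ #B ≤ #A + ℵ₀)
    (hchain : ∀ 𝒞 : Set (Set T), 𝒞.Nonempty → IsChain (· ⊆ ·) 𝒞 → (∀ S ∈ 𝒞, P S) → P (⋃₀ 𝒞))
    (e : ι → Set T) (he : ∀ α, (e α).Countable) :
    ∃ A : ι → Set T, Monotone A ∧ (∀ α, P (A α)) ∧ (∀ α, #(A α) ≤ #(Iio α) + ℵ₀) ∧
      (∀ ⦃α β⦄, α < β → e α ⊆ A β) ∧
      ∀ δ, (∃ α, α < δ) → (∀ α < δ, ∃ β, α < β ∧ β < δ) → A δ ⊆ ⋃ α < δ, A α := by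
  choose clo hsub hP hcard using hclo
  exact ⟨closedChain clo e, monotone_closedChain, closedChain_mem hsub hP hchain,
    mk_closedChain_le hcard he, fun _ _ => subset_closedChain hsub,
    fun _ => closedChain_subset_iUnion⟩

theorem exists_chain_mapsTo_indicator_closure {T ι : Type u} {Y : Type*} [Zero Y]
    [TopologicalSpace Y] [SecondCountableTopology Y] [LinearOrder ι] [WellFoundedLT ι]
    [NoMaxOrder ι] {D : Set (T → Y)} (hD : ∀ d ∈ D, (support d).Countable) {S₀ : Set T}
    (hS₀ : #S₀ ≤ #ι) :
    ∃ A : ι → Set T, Monotone A ∧ (∀ α, MapsTo (A α).indicator D (closure D)) ∧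
      (∀ α, #(A α) ≤ #(Iio α) + ℵ₀) ∧ S₀ ⊆ ⋃ α, A α ∧
      ∀ δ, (∃ α, α < δ) → (∀ α < δ, ∃ β, α < β ∧ β < δ) → A δ ⊆ ⋃ α < δ, A α := by
  obtain ⟨f⟩ := (Cardinal.le_def _ _).1 hS₀
  obtain ⟨A, hA, hAD, hAcard, hfA, hlim⟩ := exists_continuous_chain _
    (exists_superset_mapsTo_indicator_closure hD)
    (fun 𝒞 hne hchain => mapsTo_indicator_sUnion hne hchain.directedOn)
    (fun α => (↑) '' (f ⁻¹' {α})) fun α => ((countable_singleton α).preimage f.injective).image _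
  refine ⟨A, hA, hAD, hAcard, fun t ht => ?_, hlim⟩
  obtain ⟨β, hβ⟩ := exists_gt (f ⟨t, ht⟩)
  exact mem_iUnion.2 ⟨β, hfA hβ ⟨⟨t, ht⟩, rfl, rfl⟩⟩

section ProjectionTower

variable {T : Type u} {K : Set (T → unitInterval)}

theorem indicator_mem_sigmaProd (S : Set T) {x : T → unitInterval} (hx : x ∈ SigmaProd T) :
    S.indicator x ∈ SigmaProd T :=
  (show (support x).Countable from hx).mono (support_indicator.trans_subset inter_subset_right)

theorem isValdivia_image_indicator (hK : IsCompact K) (hKD : K ⊆ closure (K ∩ SigmaProd T))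
    (S : Set T) : IsValdivia (S.indicator '' K) := by
  refine ⟨T, Subtype.val, IsEmbedding.subtypeVal, ?_⟩
  rw [Subtype.range_coe]
  refine (closure_minimal inter_subset_left
    (hK.image (continuous_indicator_pi S)).isClosed).antisymm' ?_
  calc S.indicator '' K ⊆ S.indicator '' closure (K ∩ SigmaProd T) := image_mono hKD
    _ ⊆ closure (S.indicator '' (K ∩ SigmaProd T)) :=
      image_closure_subset_closure_image (continuous_indicator_pi S)
    _ ⊆ closure (S.indicator '' K ∩ SigmaProd T) := by
      refine closure_mono (subset_inter (image_mono inter_subset_left) ?_)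
      rintro _ ⟨k, ⟨-, hk⟩, rfl⟩
      exact indicator_mem_sigmaProd S hk

theorem tweight_image_indicator_le (hK : IsCompact K) (S : Set T) :
    tweight (S.indicator '' K) ≤ #S + ℵ₀ := by
  have : CompactSpace (S.indicator '' K) :=
    isCompact_iff_compactSpace.1 (hK.image (continuous_indicator_pi S))
  let res : S.indicator '' K → (S → unitInterval) := fun y t => y.1 t
  have hres : Continuous res :=
    continuous_pi fun t => (continuous_apply _).comp continuous_subtype_val
  have hinj : Injective res := fun y z hyz => by
    rw [← Subtype.coe_inj, ← indicator_eq_self_of_mem_image y.2,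
      ← indicator_eq_self_of_mem_image z.2]
    exact indicator_congr fun t ht => congrFun hyz ⟨t, ht⟩
  exact (tweight_le_of_isInducing (hres.isClosedEmbedding hinj).isInducing).trans
    (tweight_pi_le S unitInterval)

variable {ι : Type v} [LinearOrder ι] (K) {A : ι → Set T}

noncomputable def projTower (hA : Monotone A) : Tower.{u, v} ι where
  S α := (A α).indicator '' K
  topo _ := inferInstance
  r _ _ h := (mapsTo_indicator_image_indicator (hA h)).restrict _ _ _

variable {K}

theorem continuous_projTower_r (hA : Monotone A) {α β : ι} (h : α ≤ β) :
    Continuous ((projTower K hA).r h) :=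
  (continuous_indicator_pi _).restrict (mapsTo_indicator_image_indicator (hA h))

theorem projTower_isContInvSeq (hK : IsCompact K) (hA : Monotone A)
    (hlim : ∀ δ, (∃ α, α < δ) → (∀ α < δ, ∃ β, α < β ∧ β < δ) → A δ ⊆ ⋃ α < δ, A α) :
    (projTower K hA).IsContInvSeq where
  compact α := isCompact_iff_compactSpace.1 (hK.image (continuous_indicator_pi _))
  t2 _ := inferInstanceAs (T2Space ((A _).indicator '' K))
  continuous _ _ := continuous_projTower_r hA
  surjective α β h := by
    rintro ⟨_, k, hk, rfl⟩
    exact ⟨⟨_, k, hk, rfl⟩, Subtype.ext (indicator_indicator_of_subset (hA h) k)⟩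
  map_id α x := Subtype.ext (indicator_eq_self_of_mem_image x.2)
  map_comp _ _ _ h₁ h₂ x := Subtype.ext (indicator_indicator_of_subset (hA h₁) x.1)
  limit_inj δ hex hl x y hxy := by
    refine Subtype.ext (funext fun t => ?_)
    by_cases ht : t ∈ A δ
    · obtain ⟨α, hα, htα⟩ := mem_iUnion₂.1 (hlim δ hex hl ht)
      have : (A α).indicator x.1 t = (A α).indicator y.1 t :=
        congrFun (congrArg Subtype.val (hxy α hα)) t
      rwa [indicator_of_mem htα, indicator_of_mem htα] at this
    · rw [← indicator_eq_self_of_mem_image x.2, ← indicator_eq_self_of_mem_image y.2,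
        indicator_of_notMem ht, indicator_of_notMem ht]

theorem isRetraction_projTower_r (hA : Monotone A) (hKA : ∀ α, MapsTo (A α).indicator K K)
    {α β : ι} (h : α ≤ β) : IsRetraction ((projTower K hA).r h) := by
  have hsub : (A α).indicator '' K ⊆ (A β).indicator '' K := by
    rintro _ ⟨k, hk, rfl⟩
    exact ⟨_, hKA α hk, indicator_indicator_of_superset (hA h) k⟩
  refine ⟨continuous_projTower_r hA h, fun y => ⟨inclusion hsub y, ?_⟩,
    inclusion hsub, continuous_inclusion hsub, funext fun y => ?_⟩ <;>
  exact Subtype.ext (indicator_eq_self_of_mem_image y.2)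

theorem nonempty_homeomorph_projTower_lim [Nonempty ι] (hK : IsCompact K) (hA : Monotone A)
    (hKA : ∀ α, MapsTo (A α).indicator K K)
    (hsep : ∀ k ∈ K, ∀ k' ∈ K, (∀ α, EqOn k k' (A α)) → k = k') :
    Nonempty (K ≃ₜ (projTower K hA).Lim) := by
  have : CompactSpace K := isCompact_iff_compactSpace.1 hK
  have : ∀ α, T2Space ((projTower K hA).S α) := fun α =>
    inferInstanceAs (T2Space ((A α).indicator '' K))
  let Φ : K → (projTower K hA).Lim := fun k =>
    ⟨fun α => ⟨(A α).indicator k, mem_image_of_mem _ k.2⟩,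
      fun α β h => Subtype.ext (indicator_indicator_of_subset (hA h) k.1)⟩
  have hΦc : Continuous Φ := .subtype_mk (continuous_pi fun α =>
    .subtype_mk ((continuous_indicator_pi _).comp continuous_subtype_val) _) _
  have hΦi : Injective Φ := fun k k' h => Subtype.ext <| hsep k k.2 k' k'.2 fun α t ht => by
    have : (A α).indicator k.1 t = (A α).indicator k'.1 t :=
      congrFun (congrArg (fun z : (projTower K hA).Lim => (z.1 α).1) h) t
    rwa [indicator_of_mem ht, indicator_of_mem ht] at this
  have hΦs : Surjective Φ := by
    intro x
    let u : ι → T → unitInterval := fun α => (x.1 α).1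
    have huK : ∀ α, u α ∈ K := fun α => (hKA α).image_subset (x.1 α).2
    obtain ⟨k, hk, hclu⟩ := hK.exists_mapClusterPt (f := atTop) (u := u)
      (tendsto_principal.2 (.of_forall huK))
    refine ⟨⟨k, hk⟩, Subtype.ext (funext fun α => Subtype.ext ?_)⟩
    refine (isClosed_eq (continuous_indicator_pi (A α)) continuous_const).mem_of_mapClusterPt
      hclu ?_
    filter_upwards [eventually_ge_atTop α] with β hβ
    exact congrArg Subtype.val (x.2 hβ)
  exact ⟨hΦc.homeoOfEquivCompactToT2 (f := Equiv.ofBijective Φ ⟨hΦi, hΦs⟩)⟩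

end ProjectionTower

theorem statement4_general {X : Type u} [TopologicalSpace X] [CompactSpace X]
    (κ : Cardinal.{u}) (hκ : Cardinal.aleph0 ≤ κ) (hw : tweight X = κ)
    (hX : IsValdivia X) :
    ∃ T : Tower.{u, u} κ.ord.ToType,
      T.IsContInvSeq ∧
      (∀ α, IsValdivia (T.S α)) ∧
      (∀ α : κ.ord.ToType,
        tweight (T.S α) ≤ (@Ordinal.typein κ.ord.ToType (· < ·) isWellOrder_lt α).card
          + Cardinal.aleph0) ∧
      (∀ ⦃α β : κ.ord.ToType⦄ (h : α ≤ β), IsRetraction (T.r h)) ∧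
      Nonempty (X ≃ₜ T.Lim) := by
  obtain ⟨T, h, hemb, hval⟩ := hX
  set K := range h
  have hK : IsCompact K := isCompact_range hemb.continuous
  have hι : #κ.ord.ToType = κ := by rw [mk_toType, card_ord]
  have : Nonempty κ.ord.ToType := mk_ne_zero_iff.1 (hι.trans_ne (aleph0_pos.trans_le hκ).ne')
  have : NoMaxOrder κ.ord.ToType := noMaxOrder hκ
  obtain ⟨B, hB, hBw⟩ := exists_isTopologicalBasis_mk_eq_tweight X
  obtain ⟨S₀, hS₀, hsep⟩ := exists_separating_coords hB hemb.continuous hemb.injective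
  rw [hBw, hw, mul_eq_self hκ, ← hι] at hS₀
  obtain ⟨A, hA, hAD, hAcard, hS₀A, hlim⟩ :=
    exists_chain_mapsTo_indicator_closure (D := K ∩ SigmaProd T) (fun d hd => hd.2) hS₀
  have hKA : ∀ α, MapsTo (A α).indicator K K := fun α => by
    rw [hval]
    exact (hAD α).closure_left (continuous_indicator_pi _) isClosed_closure
  have hsepK : ∀ k ∈ K, ∀ k' ∈ K, (∀ α, EqOn k k' (A α)) → k = k' := by
    rintro _ ⟨a, rfl⟩ _ ⟨b, rfl⟩ hab
    refine congrArg h (hsep a b fun t ht => ?_)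
    obtain ⟨α, htα⟩ := mem_iUnion.1 (hS₀A ht)
    exact hab α htα
  refine ⟨projTower K hA, projTower_isContInvSeq hK hA hlim,
    fun α => isValdivia_image_indicator hK hval.le _, fun α => ?_,
    fun α β => isRetraction_projTower_r hA hKA, ?_⟩
  · refine (tweight_image_indicator_le hK _).trans ((add_le_add_left (hAcard α) _).trans ?_)
    rw [add_assoc, aleph0_add_aleph0, Ordinal.card_typein]
    rfl
  · obtain ⟨Φ⟩ := nonempty_homeomorph_projTower_lim hK hA hKA hsepK
    exact ⟨hemb.toHomeomorph.trans Φ⟩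

/-- every Valdivia compact space `X` of infinite weight `κ` is (up to
homeomorphism) the limit of a continuous inverse sequence, indexed by the ordinals
`α < κ`, of Valdivia compact spaces `X_α` of weight `≤ |α| + ℵ₀` whose bonding maps
are retractions. -/
theorem statement4 {X : Type u} [TopologicalSpace X] [CompactSpace X] [T2Space X]
    (κ : Cardinal.{u}) (hκ : Cardinal.aleph0 ≤ κ) (hw : tweight X = κ)
    (hX : IsValdivia X) :
    ∃ T : Tower.{u, u} κ.ord.ToType,
      T.IsContInvSeq ∧
      (∀ α, IsValdivia (T.S α)) ∧
      (∀ α : κ.ord.ToType,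
        tweight (T.S α) ≤ (@Ordinal.typein κ.ord.ToType (· < ·) isWellOrder_lt α).card
          + Cardinal.aleph0) ∧
      (∀ ⦃α β : κ.ord.ToType⦄ (h : α ≤ β), IsRetraction (T.r h)) ∧
      Nonempty (X ≃ₜ T.Lim) :=
  statement4_general κ hκ hw hX
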